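/- Let G be a finite connected graph, c: V(G) → ℝ_{>0}, and κ: V(G) → ℤ with 0 ≤ κ(u) ≤ d(u) for every vertex u. If β(G,c,κ) = ∑_{u∈V(G)} c(u)(d(u)−κ(u))(d(u)−κ(u)+1)/(2(d(u)+1)), then the quantity c(u)(d(u)−κ(u))(d(u)+κ(u)+1)/(2d(u)(d(u)+1)) is the same for every vertex u of G. -/
import Mathlib

open Finset

variable {V : Type*} [Fintype V] [DecidableEq V]


/-- A list of vertices witnesses κ-degeneracy: each vertex has at most κ of it
neighbors among the earlier vertices of the ordering. -/
def DegenList (G : SimpleGraph V) [DecidableRel G.Adj] (κ : V → ℤ) (l : List V) : Prop :=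
  l.Nodup ∧ ∀ i : Fin l.length,
    ((((l.take i).toFinset).filter (fun v => G.Adj (l.get i) v)).card : ℤ) ≤ κ (l.get i)

/-- A set of vertices is κ-degenerate if it admits a suitable linear ordering. -/
def IsDegen (G : SimpleGraph V) [DecidableRel G.Adj] (κ : V → ℤ) (I : Finset V) : Prop :=
  ∃ l : List V, l.toFinset = I ∧ DegenList G κ l

/-- Minimum total c-weighted increase ι making the whole vertex set (κ+ι)-degenerate. -/
noncomputable def betaW (G : SimpleGraph V) [DecidableRel G.Adj] (c : V → ℝ) (κ : V → ℤ) : ℝ :=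
  sInf {x : ℝ | ∃ ι : V → ℤ, (∀ u, 0 ≤ ι u) ∧
    IsDegen G (fun u => κ u + ι u) Finset.univ ∧ x = ∑ u : V, c u * (ι u : ℝ)}

section Counting

variable {n : ℕ}

/-- number of elements of `S` before `u` -/
def cntBefore (S : Finset V) (u : V) (π : V ≃ Fin n) : ℕ :=
  (S.filter (fun y => π y < π u)).card

/-- rank of `y` within `T` -/
def rankIn (T : Finset V) (y : V) (π : V ≃ Fin n) : ℕ :=
  (T.filter (fun t => π t ≤ π y)).card

lemma rankIn_strictMono {T : Finset V} {y y' : V} (π : V ≃ Fin n)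
    (hy' : y' ∈ T) (h : π y < π y') : rankIn T y π < rankIn T y' π := by
  apply Finset.card_lt_card
  rw [Finset.ssubset_iff_of_subset]
  · exact ⟨y', by simp [rankIn, hy', not_le.2 h]⟩
  · intro t ht
    simp only [rankIn, mem_filter] at ht ⊢
    exact ⟨ht.1, ht.2.trans h.le⟩

lemma rankIn_injOn {T : Finset V} (π : V ≃ Fin n) {y y' : V}
    (hy : y ∈ T) (hy' : y' ∈ T) (h : rankIn T y π = rankIn T y' π) : y = y' := by
  by_contra hne
  rcases lt_trichotomy (π y) (π y') with hlt | heq | hlt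
  · exact absurd h (Nat.ne_of_lt (rankIn_strictMono π hy' hlt))
  · exact hne (π.injective (Fin.val_injective (by exact_mod_cast congrArg Fin.val heq)))
  · exact absurd h.symm (Nat.ne_of_lt (rankIn_strictMono π hy hlt))

lemma rankIn_mem_Icc {T : Finset V} {y : V} (hy : y ∈ T) (π : V ≃ Fin n) :
    rankIn T y π ∈ Finset.Icc 1 T.card := by
  simp only [mem_Icc]
  constructor
  · exact Finset.card_pos.2 ⟨y, by simp [rankIn, hy]⟩
  · exact Finset.card_le_card (filter_subset _ _)

/-- for each `π` and each feasible rank `r`, exactly one element of `T` has rank `r` -/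
lemma rankIn_exists_unique {T : Finset V} {r : ℕ} (hr : r ∈ Finset.Icc 1 T.card)
    (π : V ≃ Fin n) : (T.filter (fun y => rankIn T y π = r)).card = 1 := by
  have himg : T.image (fun y => rankIn T y π) = Finset.Icc 1 T.card := by
    apply Finset.eq_of_subset_of_card_le
    · intro r hr
      simp only [mem_image] at hr
      obtain ⟨y, hy, rfl⟩ := hr
      exact rankIn_mem_Icc hy π
    · rw [Nat.card_Icc]
      rw [Finset.card_image_of_injOn (fun y hy y' hy' h => rankIn_injOn π hy hy' h)]
      omega
  have : r ∈ T.image (fun y => rankIn T y π) := himg ▸ hr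
  simp only [mem_image] at this
  obtain ⟨y, hy, hyr⟩ := this
  rw [Finset.card_eq_one]
  refine ⟨y, Finset.eq_singleton_iff_unique_mem.2 ⟨by simp [hy, hyr], ?_⟩⟩
  intro x hx
  simp only [mem_filter] at hx
  exact rankIn_injOn π hx.1 hy (hx.2.trans hyr.symm)

end Counting

set_option linter.unusedSectionVars false

section Count2
variable {n : ℕ}

lemma swap_mem_T {T : Finset V} {u y : V} (hu : u ∈ T) (hy : y ∈ T) {t : V} (ht : t ∈ T) :
    Equiv.swap u y t ∈ T := by
  rcases eq_or_ne t u with rfl | htu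
  · rwa [Equiv.swap_apply_left]
  rcases eq_or_ne t y with rfl | hty
  · rwa [Equiv.swap_apply_right]
  · rwa [Equiv.swap_apply_of_ne_of_ne htu hty]

lemma rankIn_swap {T : Finset V} {u y : V} (hu : u ∈ T) (hy : y ∈ T) (π : V ≃ Fin n) :
    rankIn T u ((Equiv.swap u y).trans π) = rankIn T y π := by
  unfold rankIn
  apply Finset.card_bij' (fun t _ => Equiv.swap u y t) (fun t _ => Equiv.swap u y t)
  · intro a ha
    simp only [mem_filter, Equiv.trans_apply, Equiv.swap_apply_left] at ha ⊢
    exact ⟨swap_mem_T hu hy ha.1, ha.2⟩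
  · intro a ha
    simp only [mem_filter, Equiv.trans_apply, Equiv.swap_apply_left] at ha ⊢
    refine ⟨swap_mem_T hu hy ha.1, ?_⟩
    rw [Equiv.swap_apply_self]
    exact ha.2
  · intro a _; exact Equiv.swap_apply_self _ _ _
  · intro a _; exact Equiv.swap_apply_self _ _ _

lemma count_rank_eq {T : Finset V} {u y : V} (hu : u ∈ T) (hy : y ∈ T) (r : ℕ) :
    (Finset.univ.filter (fun π : V ≃ Fin n => rankIn T u π = r)).card
      = (Finset.univ.filter (fun π : V ≃ Fin n => rankIn T y π = r)).card := by
  apply Finset.card_bij' (fun π _ => (Equiv.swap u y).trans π) (fun π _ => (Equiv.swap u y).trans π)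
  · intro π hπ
    simp only [mem_filter, mem_univ, true_and] at hπ ⊢
    rw [Equiv.swap_comm]
    exact (rankIn_swap hy hu π).trans hπ
  · intro π hπ
    simp only [mem_filter, mem_univ, true_and] at hπ ⊢
    exact (rankIn_swap hu hy π).trans hπ
  · intro π _
    ext t
    simp [Equiv.swap_apply_self]
  · intro π _
    ext t
    simp [Equiv.swap_apply_self]

end Count2

section Count3
variable {n : ℕ}

lemma count_rank_mul {S : Finset V} {u : V} (hu : u ∉ S) {r : ℕ}
    (hr : r ∈ Finset.Icc 1 (S.card + 1)) :
    (S.card + 1) * (Finset.univ.filter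
        (fun π : V ≃ Fin n => rankIn (insert u S) u π = r)).card
      = Fintype.card (V ≃ Fin n) := by
  classical
  set T := insert u S with hT
  have hTcard : T.card = S.card + 1 := Finset.card_insert_of_notMem hu
  have huT : u ∈ T := Finset.mem_insert_self u S
  have h2 : ∑ y ∈ T, (Finset.univ.filter (fun π : V ≃ Fin n => rankIn T y π = r)).card
      = Fintype.card (V ≃ Fin n) := by
    simp only [Finset.card_filter]
    rw [Finset.sum_comm]
    have : ∀ π : V ≃ Fin n, (∑ y ∈ T, if rankIn T y π = r then 1 else 0) = 1 := fun π => by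
      rw [← Finset.card_filter]; exact rankIn_exists_unique (by rwa [hTcard]) π
    rw [Finset.sum_congr rfl (fun π _ => this π), Finset.sum_const, smul_eq_mul, mul_one,
      Finset.card_univ]
  rw [← h2]
  rw [Finset.sum_congr rfl (fun y hy => (count_rank_eq huT hy r).symm)]
  rw [Finset.sum_const, hTcard, smul_eq_mul]

lemma rankIn_eq_cntBefore_succ {S : Finset V} {u : V} (hu : u ∉ S) (π : V ≃ Fin n) :
    rankIn (insert u S) u π = cntBefore S u π + 1 := by
  unfold rankIn cntBefore
  have : (insert u S).filter (fun t => π t ≤ π u)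
      = insert u (S.filter (fun y => π y < π u)) := by
    ext t
    simp only [Finset.mem_filter, Finset.mem_insert]
    constructor
    · rintro ⟨rfl | ht, hle⟩
      · exact Or.inl rfl
      · refine Or.inr ⟨ht, lt_of_le_of_ne hle (fun he => hu ?_)⟩
        rwa [π.injective he] at ht
    · rintro (rfl | ⟨ht, hlt⟩)
      · exact ⟨Or.inl rfl, le_refl _⟩
      · exact ⟨Or.inr ht, hlt.le⟩
  rw [this, Finset.card_insert_of_notMem (by simp)]

lemma count_cntBefore {S : Finset V} {u : V} (hu : u ∉ S) {j : ℕ} (hj : j ≤ S.card) :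
    (S.card + 1) * (Finset.univ.filter
        (fun π : V ≃ Fin n => cntBefore S u π = j)).card
      = Fintype.card (V ≃ Fin n) := by
  have : (Finset.univ.filter (fun π : V ≃ Fin n => cntBefore S u π = j))
      = (Finset.univ.filter (fun π : V ≃ Fin n => rankIn (insert u S) u π = j + 1)) := by
    apply Finset.filter_congr
    intro π _
    rw [rankIn_eq_cntBefore_succ hu]
    simp
  rw [this]
  exact count_rank_mul hu (by simp [Nat.succ_le_succ hj])

lemma cntBefore_le {S : Finset V} {u : V} (π : V ≃ Fin n) : cntBefore S u π ≤ S.card :=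
  Finset.card_le_card (Finset.filter_subset _ _)

lemma sum_f_cntBefore {S : Finset V} {u : V} (hu : u ∉ S) (f : ℕ → ℝ) :
    ((S.card : ℝ) + 1) * ∑ π : V ≃ Fin n, f (cntBefore S u π)
      = (Fintype.card (V ≃ Fin n) : ℝ) * ∑ j ∈ Finset.range (S.card + 1), f j := by
  classical
  have hfib : ∑ π : V ≃ Fin n, f (cntBefore S u π)
      = ∑ j ∈ Finset.range (S.card + 1),
          ((Finset.univ.filter (fun π : V ≃ Fin n => cntBefore S u π = j)).card : ℝ) * f j := by
    rw [← Finset.sum_fiberwise_of_maps_to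
      (g := fun π : V ≃ Fin n => cntBefore S u π)
      (fun π _ => Finset.mem_range.2 (Nat.lt_succ_of_le (cntBefore_le π)))]
    apply Finset.sum_congr rfl
    intro j _
    rw [Finset.sum_congr rfl (fun π hπ => by
      rw [(Finset.mem_filter.1 hπ).2])]
    rw [Finset.sum_const, nsmul_eq_mul]
  rw [hfib, Finset.mul_sum, Finset.mul_sum]
  apply Finset.sum_congr rfl
  intro j hj
  have := count_cntBefore (n := n) hu (Nat.lt_succ_iff.1 (Finset.mem_range.1 hj))
  have hcast : ((S.card : ℝ) + 1) *
      ((Finset.univ.filter (fun π : V ≃ Fin n => cntBefore S u π = j)).card : ℝ)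
      = (Fintype.card (V ≃ Fin n) : ℝ) := by
    exact_mod_cast congrArg (Nat.cast : ℕ → ℝ) this
  rw [← mul_assoc, hcast]

end Count3

lemma sum_range_max_two (d : ℕ) (κ : ℤ) (h0 : 0 ≤ κ) (hd : κ ≤ (d : ℤ)) :
    (∑ j ∈ Finset.range (d + 1), max 0 ((j : ℤ) - κ)) * 2
      = ((d : ℤ) - κ) * ((d : ℤ) - κ + 1) := by
  induction d with
  | zero =>
      have : κ = 0 := le_antisymm (by exact_mod_cast hd) h0
      subst this
      simp
  | succ d ih =>
      rcases le_or_gt κ (d : ℤ) with h | h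
      · rw [Finset.sum_range_succ, add_mul, ih h]
        have hmax : max 0 ((d + 1 : ℕ) - κ) = ((d : ℤ) + 1 - κ) := by
          rw [max_eq_right]
          · push_cast; ring
          · push_cast; omega
        rw [hmax]
        push_cast
        ring
      · have hκ : κ = (d : ℤ) + 1 := by omega
        subst hκ
        rw [Finset.sum_eq_zero, zero_mul]
        · push_cast; ring
        · intro j hj
          have : (j : ℤ) ≤ (d : ℤ) + 1 := by
            exact_mod_cast Nat.lt_succ_iff.1 (Finset.mem_range.1 hj)
          rw [max_eq_left]; omega

lemma sum_range_max_real (d : ℕ) (κ : ℤ) (h0 : 0 ≤ κ) (hd : κ ≤ (d : ℤ)) :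
    (∑ j ∈ Finset.range (d + 1), ((max 0 ((j : ℤ) - κ) : ℤ) : ℝ))
      = ((d : ℝ) - κ) * ((d : ℝ) - κ + 1) / 2 := by
  have := sum_range_max_two d κ h0 hd
  have h2 : ((∑ j ∈ Finset.range (d + 1), max 0 ((j : ℤ) - κ)) * 2 : ℤ)
      = (((d : ℤ) - κ) * ((d : ℤ) - κ + 1)) := this
  have := congrArg (Int.cast : ℤ → ℝ) h2
  push_cast at this ⊢
  linarith

section Graph

variable (G : SimpleGraph V) [DecidableRel G.Adj]

/-- number of neighbors of `w` that come before `w` under `π` -/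
def EE (π : V ≃ Fin (Fintype.card V)) (w : V) : ℕ := cntBefore (G.neighborFinset w) w π

/-- the cost of the incentive associated with the ordering `π` -/
noncomputable def XX (c : V → ℝ) (κ : V → ℤ) (π : V ≃ Fin (Fintype.card V)) : ℝ :=
  ∑ w : V, c w * ((max 0 ((EE G π w : ℤ) - κ w) : ℤ) : ℝ)

lemma take_ofFn_toFinset (π : V ≃ Fin (Fintype.card V)) (k : ℕ) :
    ((List.ofFn (fun i => π.symm i)).take k).toFinset
      = Finset.univ.filter (fun y => (π y : ℕ) < k) := by
  ext y
  simp only [List.mem_toFinset, Finset.mem_filter, Finset.mem_univ, true_and]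
  rw [List.mem_take_iff_getElem]
  constructor
  · rintro ⟨j, hj, hy⟩
    simp only [List.getElem_ofFn] at hy
    subst hy
    simp only [Equiv.apply_symm_apply]
    simp only [List.length_ofFn, lt_min_iff] at hj
    exact hj.1
  · intro hy
    refine ⟨(π y : ℕ), ?_, ?_⟩
    · simp only [List.length_ofFn, lt_min_iff]
      exact ⟨hy, (π y).isLt⟩
    · simp only [List.getElem_ofFn]
      simp [Fin.eta]

lemma isDegen_of_perm (κ : V → ℤ) (π : V ≃ Fin (Fintype.card V)) :
    IsDegen G (fun w => κ w + max 0 ((EE G π w : ℤ) - κ w)) Finset.univ := by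
  classical
  refine ⟨List.ofFn (fun i => π.symm i), ?_, ?_, ?_⟩
  · apply Finset.eq_univ_of_forall
    intro x
    rw [List.mem_toFinset, List.mem_ofFn]
    exact ⟨π x, by simp⟩
  · exact List.nodup_ofFn.2 π.symm.injective
  · intro i
    set w := (List.ofFn (fun i => π.symm i)).get i with hw
    have hw' : w = π.symm (Fin.cast (by simp) i) := List.get_ofFn _ _
    have hπw : (π w : ℕ) = (i : ℕ) := by rw [hw']; simp
    have hset : (((List.ofFn (fun i => π.symm i)).take i).toFinset).filter
        (fun v => G.Adj w v) = (G.neighborFinset w).filter (fun y => π y < π w) := by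
      rw [take_ofFn_toFinset]
      ext y
      simp only [Finset.mem_filter, Finset.mem_univ, true_and,
        SimpleGraph.mem_neighborFinset]
      rw [Fin.lt_def, hπw]
      tauto
    rw [hset]
    have : ((G.neighborFinset w).filter (fun y => π y < π w)).card = EE G π w := rfl
    rw [this]
    show (EE G π w : ℤ) ≤ κ w + max 0 ((EE G π w : ℤ) - κ w)
    linarith [le_max_right (0 : ℤ) ((EE G π w : ℤ) - κ w)]

lemma betaW_le_XX (c : V → ℝ) (hc : ∀ u, 0 < c u) (κ : V → ℤ)
    (π : V ≃ Fin (Fintype.card V)) : betaW G c κ ≤ XX G c κ π := by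
  apply csInf_le
  · refine ⟨0, ?_⟩
    rintro x ⟨ι, hι, _, rfl⟩
    exact Finset.sum_nonneg fun u _ => mul_nonneg (hc u).le (by exact_mod_cast hι u)
  · exact ⟨fun w => max 0 ((EE G π w : ℤ) - κ w), fun u => le_max_left _ _,
      isDegen_of_perm G κ π, rfl⟩

end Graph

section Graph2

variable (G : SimpleGraph V) [DecidableRel G.Adj]

lemma sum_XX (c : V → ℝ) (κ : V → ℤ) (hκ : ∀ u, 0 ≤ κ u ∧ κ u ≤ (G.degree u : ℤ)) :
    ∑ π : V ≃ Fin (Fintype.card V), XX G c κ π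
      = (Fintype.card (V ≃ Fin (Fintype.card V)) : ℝ) * ∑ u : V,
          c u * (((G.degree u : ℝ) - κ u) * ((G.degree u : ℝ) - κ u + 1))
            / (2 * (G.degree u + 1)) := by
  classical
  unfold XX
  rw [Finset.sum_comm, Finset.mul_sum]
  apply Finset.sum_congr rfl
  intro w _
  have hu : w ∉ G.neighborFinset w := by
    simp [SimpleGraph.mem_neighborFinset]
  have hd : (G.neighborFinset w).card = G.degree w := rfl
  have hkey := sum_f_cntBefore (n := Fintype.card V) hu
    (fun j => ((max 0 ((j : ℤ) - κ w) : ℤ) : ℝ))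
  rw [hd] at hkey
  have hgauss := sum_range_max_real (G.degree w) (κ w) (hκ w).1 (hκ w).2
  rw [hgauss] at hkey
  have hEE : ∀ π : V ≃ Fin (Fintype.card V), EE G π w = cntBefore (G.neighborFinset w) w π :=
    fun _ => rfl
  have hdpos : ((G.degree w : ℝ) + 1) ≠ 0 := by positivity
  rw [← Finset.mul_sum]
  have hS : ∑ π : V ≃ Fin (Fintype.card V), ((max 0 ((EE G π w : ℤ) - κ w) : ℤ) : ℝ)
      = (Fintype.card (V ≃ Fin (Fintype.card V)) : ℝ)
        * (((G.degree w : ℝ) - κ w) * ((G.degree w : ℝ) - κ w + 1) / 2)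
        / ((G.degree w : ℝ) + 1) := by
    simp only [hEE]
    field_simp at hkey ⊢
    linarith [hkey]
  rw [hS]
  field_simp

lemma XX_const (c : V → ℝ) (hc : ∀ u, 0 < c u) (κ : V → ℤ)
    (hκ : ∀ u, 0 ≤ κ u ∧ κ u ≤ (G.degree u : ℤ))
    (hext : betaW G c κ = ∑ u : V,
        c u * (((G.degree u : ℝ) - κ u) * ((G.degree u : ℝ) - κ u + 1))
          / (2 * (G.degree u + 1))) :
    ∀ π : V ≃ Fin (Fintype.card V), XX G c κ π = betaW G c κ := by
  classical
  have hle : ∀ π : V ≃ Fin (Fintype.card V), betaW G c κ ≤ XX G c κ π :=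
    fun π => betaW_le_XX G c hc κ π
  have hsum : ∑ π : V ≃ Fin (Fintype.card V), (XX G c κ π - betaW G c κ) = 0 := by
    rw [Finset.sum_sub_distrib, sum_XX G c κ hκ, ← hext, Finset.sum_const, Finset.card_univ,
      nsmul_eq_mul, sub_self]
  have := (Finset.sum_eq_zero_iff_of_nonneg
    (fun π _ => sub_nonneg.2 (hle π))).1 hsum
  intro π
  have := this π (Finset.mem_univ π)
  linarith
end Graph2

section Construct

lemma exists_perm (u v : V) (huv : u ≠ v) (B : Finset V) (hu : u ∉ B) (hv : v ∉ B) :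
    ∃ π : V ≃ Fin (Fintype.card V),
      ((π v : ℕ) = (π u : ℕ) + 1) ∧ ∀ w, (π w < π u ↔ w ∈ B) := by
  classical
  have hn : 0 < Fintype.card V := Fintype.card_pos_iff.2 ⟨u⟩
  set n := Fintype.card V with hn'
  let e := Fintype.equivFin V
  let tier : V → ℕ := fun w => if w ∈ B then 0 else if w = u then 1 else if w = v then 2 else 3
  let f : V → ℕ := fun w => tier w * n + (e w : ℕ)
  have hft : ∀ x y : V, tier x < tier y → f x < f y := by
    intro x y h
    have h1 : (e x : ℕ) < n := (e x).isLt
    calc tier x * n + (e x : ℕ) < tier x * n + n := by omega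
      _ = (tier x + 1) * n := by ring
      _ ≤ tier y * n := Nat.mul_le_mul_right n h
      _ ≤ f y := Nat.le_add_right _ _
  have hfinj : Function.Injective f := by
    intro a b hab
    have hta : tier a = tier b := by
      by_contra hne
      rcases Nat.lt_or_ge (tier a) (tier b) with h | h
      · exact absurd hab (Nat.ne_of_lt (hft a b h))
      · exact absurd hab.symm (Nat.ne_of_lt (hft b a (lt_of_le_of_ne h (Ne.symm hne))))
    have : (e a : ℕ) = (e b : ℕ) := by
      simp only [f] at hab
      rw [hta] at hab
      omega
    exact e.injective (Fin.val_injective this)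
  letI : LinearOrder V := LinearOrder.lift' f hfinj
  have hltf : ∀ a b : V, a < b ↔ f a < f b := fun a b => lt_iff_lt_of_le_iff_le Iff.rfl
  have htier_u : tier u = 1 := by simp [tier, hu, huv]
  have htier_v : tier v = 2 := by simp [tier, hv, (Ne.symm huv)]
  have hfu : ∀ w, f w < f u ↔ w ∈ B := by
    intro w
    constructor
    · intro h
      by_contra hw
      rcases eq_or_ne w u with rfl | hwu
      · exact absurd h (lt_irrefl _)
      · have : tier u < tier w := by
          rw [htier_u]
          simp only [tier, if_neg hw, if_neg hwu]
          split <;> omega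
        exact absurd h (not_lt.2 (hft u w this).le)
    · intro h
      apply hft
      rw [htier_u]
      simp [tier, h]
  let oiso := (monoEquivOfFin V hn'.symm).symm
  refine ⟨oiso.toEquiv, ?_, ?_⟩
  · have hlt1 : oiso.toEquiv u < oiso.toEquiv v := by
      rw [show (oiso.toEquiv u < oiso.toEquiv v) ↔ u < v from oiso.lt_iff_lt, hltf]
      exact hft u v (by rw [htier_u, htier_v]; omega)
    have hval : ((oiso.toEquiv u : ℕ) + 1) < n := by
      have := (oiso.toEquiv v).isLt
      have := hlt1
      omega
    set x := oiso.toEquiv.symm ⟨(oiso.toEquiv u : ℕ) + 1, hval⟩ with hx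
    have hπx : (oiso.toEquiv x : ℕ) = (oiso.toEquiv u : ℕ) + 1 := by
      rw [hx, Equiv.apply_symm_apply]
    have hux : u < x := by
      rw [← oiso.lt_iff_lt]
      show oiso.toEquiv u < oiso.toEquiv x
      rw [Fin.lt_def, hπx]
      omega
    have hxB : x ∉ B := by
      intro hxB
      have : x < u := by rw [hltf]; exact (hfu x).2 hxB
      exact absurd (this.trans hux) (lt_irrefl _)
    have hxu : x ≠ u := ne_of_gt hux
    rcases eq_or_ne x v with heq | hxv
    · rw [← heq]; exact hπx
    · exfalso
      have htx : tier x = 3 := by simp [tier, hxB, hxu, hxv]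
      have : v < x := by rw [hltf]; exact hft v x (by rw [htier_v, htx]; omega)
      have hvx : oiso.toEquiv v < oiso.toEquiv x := by
        rw [show (oiso.toEquiv v < oiso.toEquiv x) ↔ v < x from oiso.lt_iff_lt]
        exact this
      rw [Fin.lt_def, hπx] at hvx
      have := hlt1
      rw [Fin.lt_def] at this
      omega
  · intro w
    rw [show (oiso.toEquiv w < oiso.toEquiv u) ↔ w < u from oiso.lt_iff_lt, hltf]
    exact hfu w

end Construct

section Swap

variable (G : SimpleGraph V) [DecidableRel G.Adj]

lemma val_ne_of_ne {n : ℕ} (π : V ≃ Fin n) {a b : V} (h : a ≠ b) : (π a : ℕ) ≠ (π b : ℕ) :=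
  fun he => h (π.injective (Fin.val_injective he))

lemma EE_swap_other {u v : V} (π : V ≃ Fin (Fintype.card V))
    (hcons : (π v : ℕ) = (π u : ℕ) + 1) {w : V} (hwu : w ≠ u) (hwv : w ≠ v) :
    EE G ((Equiv.swap u v).trans π) w = EE G π w := by
  unfold EE cntBefore
  congr 1
  apply Finset.filter_congr
  intro y hy
  have hπw : ((Equiv.swap u v).trans π) w = π w := by
    simp [Equiv.swap_apply_of_ne_of_ne hwu hwv]
  rw [hπw]
  have hwu' := val_ne_of_ne π hwu
  have hwv' := val_ne_of_ne π hwv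
  rcases eq_or_ne y u with rfl | hyu
  · simp only [Equiv.trans_apply, Equiv.swap_apply_left]
    rw [Fin.lt_def, Fin.lt_def]
    omega
  rcases eq_or_ne y v with rfl | hyv
  · simp only [Equiv.trans_apply, Equiv.swap_apply_right]
    rw [Fin.lt_def, Fin.lt_def]
    omega
  · simp [Equiv.swap_apply_of_ne_of_ne hyu hyv]

lemma EE_swap_u {u v : V} (hadj : G.Adj u v) (π : V ≃ Fin (Fintype.card V))
    (hcons : (π v : ℕ) = (π u : ℕ) + 1) :
    EE G ((Equiv.swap u v).trans π) u = EE G π u + 1 := by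
  unfold EE cntBefore
  have hset : (G.neighborFinset u).filter (fun y => ((Equiv.swap u v).trans π) y
        < ((Equiv.swap u v).trans π) u)
      = insert v ((G.neighborFinset u).filter (fun y => π y < π u)) := by
    ext y
    simp only [Finset.mem_filter, Finset.mem_insert, SimpleGraph.mem_neighborFinset,
      Equiv.trans_apply, Equiv.swap_apply_left]
    rcases eq_or_ne y u with rfl | hyu
    · constructor
      · rintro ⟨ha, _⟩; exact absurd ha G.irrefl
      · rintro (rfl | ⟨ha, _⟩)
        · exact absurd rfl hadj.ne
        · exact absurd ha G.irrefl
    rcases eq_or_ne y v with rfl | hyv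
    · simp only [Equiv.swap_apply_right]
      rw [Fin.lt_def]
      constructor
      · intro _; left; trivial
      · intro _; exact ⟨hadj, by omega⟩
    · rw [Equiv.swap_apply_of_ne_of_ne hyu hyv]
      have := val_ne_of_ne π hyu
      constructor
      · rintro ⟨ha, hlt⟩
        refine Or.inr ⟨ha, ?_⟩
        rw [Fin.lt_def] at hlt ⊢
        omega
      · rintro (rfl | ⟨ha, hlt⟩)
        · exact absurd rfl hyv
        · refine ⟨ha, ?_⟩
          rw [Fin.lt_def] at hlt ⊢
          omega
  rw [hset, Finset.card_insert_of_notMem]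
  simp only [Finset.mem_filter, SimpleGraph.mem_neighborFinset, not_and]
  intro _
  rw [Fin.lt_def]
  omega

lemma EE_swap_v {u v : V} (hadj : G.Adj u v) (π : V ≃ Fin (Fintype.card V))
    (hcons : (π v : ℕ) = (π u : ℕ) + 1) :
    EE G π v = EE G ((Equiv.swap u v).trans π) v + 1 := by
  unfold EE cntBefore
  have hne := hadj.ne
  have hset : (G.neighborFinset v).filter (fun y => π y < π v)
      = insert u ((G.neighborFinset v).filter (fun y => ((Equiv.swap u v).trans π) y
          < ((Equiv.swap u v).trans π) v)) := by
    ext y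
    simp only [Finset.mem_filter, Finset.mem_insert, SimpleGraph.mem_neighborFinset,
      Equiv.trans_apply, Equiv.swap_apply_right]
    rcases eq_or_ne y u with rfl | hyu
    · simp only [Equiv.swap_apply_left]
      constructor
      · intro _; left; trivial
      · intro _
        refine ⟨hadj.symm, ?_⟩
        rw [Fin.lt_def]
        omega
    rcases eq_or_ne y v with rfl | hyv
    · constructor
      · rintro ⟨ha, _⟩; exact absurd ha G.irrefl
      · rintro (rfl | ⟨ha, _⟩)
        · exact absurd rfl (Ne.symm hne)
        · exact absurd ha G.irrefl
    · rw [Equiv.swap_apply_of_ne_of_ne hyu hyv]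
      have := val_ne_of_ne π hyu
      constructor
      · rintro ⟨ha, hlt⟩
        refine Or.inr ⟨ha, ?_⟩
        rw [Fin.lt_def] at hlt ⊢
        omega
      · rintro (rfl | ⟨ha, hlt⟩)
        · exact absurd rfl hyu
        · refine ⟨ha, ?_⟩
          rw [Fin.lt_def] at hlt ⊢
          omega
  rw [hset, Finset.card_insert_of_notMem]
  simp only [Finset.mem_filter, SimpleGraph.mem_neighborFinset, not_and,
    Equiv.trans_apply, Equiv.swap_apply_left, Equiv.swap_apply_right]
  intro _
  rw [Fin.lt_def]
  omega

end Swap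

section Key

variable (G : SimpleGraph V) [DecidableRel G.Adj]

lemma max_succ_step_real (e : ℕ) (k : ℤ) :
    ((max 0 (((e + 1 : ℕ) : ℤ) - k) : ℤ) : ℝ)
      = ((max 0 ((e : ℤ) - k) : ℤ) : ℝ) + (if k ≤ (e : ℤ) then 1 else 0) := by
  rcases le_or_gt k e with h | h
  · rw [if_pos h, max_eq_right (by push_cast; omega), max_eq_right (by omega)]
    push_cast
    ring
  · rw [if_neg (not_le.2 h), max_eq_left (by push_cast; omega), max_eq_left (by omega)]
    push_cast
    ring

lemma key_indicator (c : V → ℝ) (hc : ∀ u, 0 < c u) (κ : V → ℤ)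
    (hκ : ∀ u, 0 ≤ κ u ∧ κ u ≤ (G.degree u : ℤ))
    (hext : betaW G c κ = ∑ u : V,
        c u * (((G.degree u : ℝ) - κ u) * ((G.degree u : ℝ) - κ u + 1))
          / (2 * (G.degree u + 1)))
    {u v : V} (hadj : G.Adj u v) (B : Finset V) (hu : u ∉ B) (hv : v ∉ B) :
    c u * (if κ u ≤ ((B ∩ G.neighborFinset u).card : ℤ) then 1 else 0)
      = c v * (if κ v ≤ ((B ∩ G.neighborFinset v).card : ℤ) then 1 else 0) := by
  classical
  obtain ⟨π, hcons, hB⟩ := exists_perm u v hadj.ne B hu hv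
  set π' := (Equiv.swap u v).trans π with hπ'
  have ha : EE G π u = (B ∩ G.neighborFinset u).card := by
    unfold EE cntBefore
    congr 1
    ext y
    simp only [Finset.mem_filter, Finset.mem_inter]
    rw [hB y]
    tauto
  have hbv : EE G π v = (B ∩ G.neighborFinset v).card + 1 := by
    unfold EE cntBefore
    have : (G.neighborFinset v).filter (fun y => π y < π v)
        = insert u (B ∩ G.neighborFinset v) := by
      ext y
      simp only [Finset.mem_filter, Finset.mem_insert, Finset.mem_inter,
        SimpleGraph.mem_neighborFinset]
      constructor
      · rintro ⟨hadjy, hlt⟩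
        rcases eq_or_ne y u with rfl | hyu
        · exact Or.inl rfl
        · refine Or.inr ⟨?_, hadjy⟩
          rw [← hB y]
          rw [Fin.lt_def] at hlt ⊢
          have := val_ne_of_ne π hyu
          omega
      · rintro (rfl | ⟨hyB, hadjy⟩)
        · refine ⟨hadj.symm, ?_⟩
          rw [Fin.lt_def]
          omega
        · refine ⟨hadjy, ?_⟩
          have := (hB y).2 hyB
          rw [Fin.lt_def] at this ⊢
          omega
    rw [this, Finset.card_insert_of_notMem (by simp [hu])]
  have hEu' : EE G π' u = EE G π u + 1 := EE_swap_u G hadj π hcons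
  have hEv' : EE G π v = EE G π' v + 1 := EE_swap_v G hadj π hcons
  have hXe : XX G c κ π = XX G c κ π' := by
    rw [XX_const G c hc κ hκ hext, XX_const G c hc κ hκ hext]
  unfold XX at hXe
  have hvmem : v ∈ Finset.univ.erase u :=
    Finset.mem_erase.2 ⟨Ne.symm hadj.ne, Finset.mem_univ v⟩
  have hsplit : ∀ g : V → ℝ, ∑ w : V, g w
      = g u + (g v + ∑ w ∈ (Finset.univ.erase u).erase v, g w) := by
    intro g
    rw [Finset.add_sum_erase _ g hvmem, Finset.add_sum_erase _ g (Finset.mem_univ u)]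
  rw [hsplit, hsplit] at hXe
  have hrest : ∑ w ∈ (Finset.univ.erase u).erase v,
        c w * ((max 0 ((EE G π w : ℤ) - κ w) : ℤ) : ℝ)
      = ∑ w ∈ (Finset.univ.erase u).erase v,
        c w * ((max 0 ((EE G π' w : ℤ) - κ w) : ℤ) : ℝ) := by
    apply Finset.sum_congr rfl
    intro w hw
    have hw' := Finset.mem_erase.1 hw
    have hw'' := Finset.mem_erase.1 hw'.2
    rw [EE_swap_other G π hcons hw''.1 hw'.1]
  rw [hrest] at hXe
  have s1 : ((max 0 ((EE G π' u : ℤ) - κ u) : ℤ) : ℝ)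
      = ((max 0 ((EE G π u : ℤ) - κ u) : ℤ) : ℝ)
        + (if κ u ≤ (EE G π u : ℤ) then 1 else 0) := by
    rw [hEu']
    exact max_succ_step_real (EE G π u) (κ u)
  have s2 : ((max 0 ((EE G π v : ℤ) - κ v) : ℤ) : ℝ)
      = ((max 0 ((EE G π' v : ℤ) - κ v) : ℤ) : ℝ)
        + (if κ v ≤ (EE G π' v : ℤ) then 1 else 0) := by
    rw [hEv']
    exact max_succ_step_real (EE G π' v) (κ v)
  rw [s1, s2] at hXe
  have hEπ'v : EE G π' v = (B ∩ G.neighborFinset v).card := by omega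
  have h1 : (if κ u ≤ ((B ∩ G.neighborFinset u).card : ℤ) then (1:ℝ) else 0)
      = (if κ u ≤ (EE G π u : ℤ) then 1 else 0) := by rw [ha]
  have h2 : (if κ v ≤ ((B ∩ G.neighborFinset v).card : ℤ) then (1:ℝ) else 0)
      = (if κ v ≤ (EE G π' v : ℤ) then 1 else 0) := by rw [hEπ'v]
  rw [h1, h2]
  linarith [hXe]

end Key

section Cases

variable (G : SimpleGraph V) [DecidableRel G.Adj]

lemma exists_B {u v : V} (hadj : G.Adj u v) (p q r : ℕ)
    (hp : p ≤ (((G.neighborFinset u).erase v) ∩ ((G.neighborFinset v).erase u)).card)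
    (hq : q ≤ ((((G.neighborFinset u).erase v)) \ ((G.neighborFinset v).erase u)).card)
    (hr : r ≤ ((((G.neighborFinset v).erase u)) \ ((G.neighborFinset u).erase v)).card) :
    ∃ B : Finset V, u ∉ B ∧ v ∉ B
      ∧ (B ∩ G.neighborFinset u).card = p + q ∧ (B ∩ G.neighborFinset v).card = p + r := by
  classical
  set A := (G.neighborFinset u).erase v with hA
  set A' := (G.neighborFinset v).erase u with hA'
  obtain ⟨P, hPs, hPc⟩ := Finset.exists_subset_card_eq hp
  obtain ⟨Q, hQs, hQc⟩ := Finset.exists_subset_card_eq hq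
  obtain ⟨R, hRs, hRc⟩ := Finset.exists_subset_card_eq hr
  have hPA : P ⊆ A := hPs.trans (Finset.inter_subset_left)
  have hPA' : P ⊆ A' := hPs.trans (Finset.inter_subset_right)
  have hQA : Q ⊆ A := hQs.trans (Finset.sdiff_subset)
  have hRA' : R ⊆ A' := hRs.trans (Finset.sdiff_subset)
  have hAu : u ∉ A := fun h => G.irrefl (by
    have := Finset.mem_of_mem_erase h
    rwa [SimpleGraph.mem_neighborFinset] at this)
  have hA'u : u ∉ A' := Finset.notMem_erase u _
  have hAv : v ∉ A := Finset.notMem_erase v _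
  have hA'v : v ∉ A' := fun h => G.irrefl (by
    have := Finset.mem_of_mem_erase h
    rwa [SimpleGraph.mem_neighborFinset] at this)
  refine ⟨P ∪ Q ∪ R, ?_, ?_, ?_, ?_⟩
  · simp only [Finset.mem_union, not_or]
    exact ⟨⟨fun h => hAu (hPA h), fun h => hAu (hQA h)⟩, fun h => hA'u (hRA' h)⟩
  · simp only [Finset.mem_union, not_or]
    exact ⟨⟨fun h => hAv (hPA h), fun h => hAv (hQA h)⟩, fun h => hA'v (hRA' h)⟩
  · have hset : (P ∪ Q ∪ R) ∩ G.neighborFinset u = P ∪ Q := by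
      ext x
      simp only [Finset.mem_inter, Finset.mem_union]
      constructor
      · rintro ⟨(h | h) | h, hx⟩
        · exact Or.inl h
        · exact Or.inr h
        · exfalso
          have hxA' := hRs h
          rw [Finset.mem_sdiff] at hxA'
          apply hxA'.2
          rw [hA, Finset.mem_erase]
          refine ⟨?_, hx⟩
          intro hxv
          subst hxv
          exact hA'v (hRA' h)
      · rintro (h | h)
        · exact ⟨Or.inl (Or.inl h), Finset.mem_of_mem_erase (hPA h)⟩
        · exact ⟨Or.inl (Or.inr h), Finset.mem_of_mem_erase (hQA h)⟩
    rw [hset, Finset.card_union_of_disjoint, hPc, hQc]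
    exact Finset.disjoint_left.2 fun x hxP hxQ => (Finset.mem_sdiff.1 (hQs hxQ)).2 (hPA' hxP)
  · have hset : (P ∪ Q ∪ R) ∩ G.neighborFinset v = P ∪ R := by
      ext x
      simp only [Finset.mem_inter, Finset.mem_union]
      constructor
      · rintro ⟨(h | h) | h, hx⟩
        · exact Or.inl h
        · exfalso
          have hxA := hQs h
          rw [Finset.mem_sdiff] at hxA
          apply hxA.2
          rw [hA', Finset.mem_erase]
          refine ⟨?_, hx⟩
          intro hxu
          subst hxu
          exact hAu (hQA h)
        · exact Or.inr h
      · rintro (h | h)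
        · exact ⟨Or.inl (Or.inl h), Finset.mem_of_mem_erase (hPA' h)⟩
        · exact ⟨Or.inr h, Finset.mem_of_mem_erase (hRA' h)⟩
    rw [hset, Finset.card_union_of_disjoint, hPc, hRc]
    exact Finset.disjoint_left.2 fun x hxP hxR => (Finset.mem_sdiff.1 (hRs hxR)).2 (hPA hxP)

end Cases

section Final

variable (G : SimpleGraph V) [DecidableRel G.Adj]

variable (c : V → ℝ) (κ : V → ℤ)

lemma auxAB (hc : ∀ u, 0 < c u)
    (hκ : ∀ u, 0 ≤ κ u ∧ κ u ≤ (G.degree u : ℤ))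
    (hext : betaW G c κ = ∑ u : V,
        c u * (((G.degree u : ℝ) - κ u) * ((G.degree u : ℝ) - κ u + 1))
          / (2 * (G.degree u + 1)))
    {u v : V} (hadj : G.Adj u v) (hlt : κ u < (G.degree u : ℤ)) :
    κ v ≤ κ u ∧ κ v < (G.degree v : ℤ) := by
  classical
  set ku := (κ u).toNat with hku'
  have hku : (ku : ℤ) = κ u := Int.toNat_of_nonneg (hκ u).1
  have hvA : v ∈ G.neighborFinset u := (SimpleGraph.mem_neighborFinset G u v).2 hadj
  have hAcard : ((G.neighborFinset u).erase v).card = G.degree u - 1 :=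
    Finset.card_erase_of_mem hvA
  have hdu : 1 ≤ G.degree u := by
    have : 0 < (G.neighborFinset u).card := Finset.card_pos.2 ⟨v, hvA⟩
    exact this
  have hku_le : ku ≤ G.degree u - 1 := by omega
  obtain ⟨B, hBs, hBc⟩ := Finset.exists_subset_card_eq (hku_le.trans hAcard.ge)
  have hBNu : B ⊆ G.neighborFinset u := hBs.trans (Finset.erase_subset _ _)
  have huB : u ∉ B := fun h => G.irrefl ((SimpleGraph.mem_neighborFinset G u u).1 (hBNu h))
  have hvB : v ∉ B := fun h => Finset.notMem_erase v _ (hBs h)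
  have h1 : (B ∩ G.neighborFinset u).card = ku := by
    rw [Finset.inter_eq_left.2 hBNu, hBc]
  have h2a : (B ∩ G.neighborFinset v).card ≤ ku := by
    rw [← hBc]
    exact Finset.card_le_card Finset.inter_subset_left
  have h2b : (B ∩ G.neighborFinset v).card ≤ G.degree v - 1 := by
    have hsub : B ∩ G.neighborFinset v ⊆ (G.neighborFinset v).erase u := by
      intro x hx
      rw [Finset.mem_inter] at hx
      exact Finset.mem_erase.2 ⟨fun h => huB (h ▸ hx.1), hx.2⟩
    have := Finset.card_le_card hsub
    rwa [Finset.card_erase_of_mem ((SimpleGraph.mem_neighborFinset G v u).2 hadj.symm)] at this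
  have hdv : 1 ≤ G.degree v := by
    have : 0 < (G.neighborFinset v).card :=
      Finset.card_pos.2 ⟨u, (SimpleGraph.mem_neighborFinset G v u).2 hadj.symm⟩
    exact this
  have hkey := key_indicator G c hc κ hκ hext hadj B huB hvB
  rw [h1, if_pos (le_of_eq hku.symm), mul_one] at hkey
  have hind : κ v ≤ ((B ∩ G.neighborFinset v).card : ℤ) := by
    by_contra hcon
    rw [if_neg hcon, mul_zero] at hkey
    exact absurd hkey (hc u).ne'
  constructor
  · omega
  · omega

lemma c_eq (hc : ∀ u, 0 < c u)
    (hκ : ∀ u, 0 ≤ κ u ∧ κ u ≤ (G.degree u : ℤ))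
    (hext : betaW G c κ = ∑ u : V,
        c u * (((G.degree u : ℝ) - κ u) * ((G.degree u : ℝ) - κ u + 1))
          / (2 * (G.degree u + 1)))
    {u v : V} (hadj : G.Adj u v) (hu : κ u < (G.degree u : ℤ))
    (hv : κ v < (G.degree v : ℤ)) (hκeq : κ u = κ v) : c u = c v := by
  classical
  set ku := (κ u).toNat with hku'
  have hku : (ku : ℤ) = κ u := Int.toNat_of_nonneg (hκ u).1
  set A := (G.neighborFinset u).erase v with hA
  set A' := (G.neighborFinset v).erase u with hA'
  have hAcard : A.card = G.degree u - 1 :=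
    Finset.card_erase_of_mem ((SimpleGraph.mem_neighborFinset G u v).2 hadj)
  have hA'card : A'.card = G.degree v - 1 :=
    Finset.card_erase_of_mem ((SimpleGraph.mem_neighborFinset G v u).2 hadj.symm)
  set i := (A ∩ A').card with hi
  have hIA : (A \ A').card + (A ∩ A').card = A.card := Finset.card_sdiff_add_card_inter A A'
  have hIA' : (A' \ A).card + (A' ∩ A).card = A'.card := Finset.card_sdiff_add_card_inter A' A
  have hcomm : (A' ∩ A).card = i := by rw [Finset.inter_comm]
  set p := min i ku with hp
  have hdu1 : 1 ≤ G.degree u := by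
    have : 0 < (G.neighborFinset u).card :=
      Finset.card_pos.2 ⟨v, (SimpleGraph.mem_neighborFinset G u v).2 hadj⟩
    exact this
  have hile : i ≤ A.card := Finset.card_le_card Finset.inter_subset_left
  obtain ⟨B, huB, hvB, hBu, hBv⟩ := exists_B G hadj p (ku - p) (ku - p)
    (by show p ≤ (A ∩ A').card; omega)
    (by show ku - p ≤ (A \ A').card; omega)
    (by show ku - p ≤ (A' \ A).card; omega)
  have hBu' : (B ∩ G.neighborFinset u).card = ku := by omega
  have hBv' : (B ∩ G.neighborFinset v).card = ku := by omega
  have hkey := key_indicator G c hc κ hκ hext hadj B huB hvB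
  rw [hBu', hBv', if_pos (le_of_eq hku.symm), if_pos (le_of_eq (hκeq ▸ hku).symm),
    mul_one, mul_one] at hkey
  exact hkey

lemma auxC (hc : ∀ u, 0 < c u)
    (hκ : ∀ u, 0 ≤ κ u ∧ κ u ≤ (G.degree u : ℤ))
    (hext : betaW G c κ = ∑ u : V,
        c u * (((G.degree u : ℝ) - κ u) * ((G.degree u : ℝ) - κ u + 1))
          / (2 * (G.degree u + 1)))
    {u v : V} (hadj : G.Adj u v) (hu : κ u < (G.degree u : ℤ))
    (hv : κ v < (G.degree v : ℤ)) (hκeq : κ u = κ v) (hpos : 1 ≤ κ u)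
    (hdlt : G.degree u < G.degree v) : False := by
  classical
  set ku := (κ u).toNat with hku'
  have hku : (ku : ℤ) = κ u := Int.toNat_of_nonneg (hκ u).1
  have hku1 : 1 ≤ ku := by omega
  set A := (G.neighborFinset u).erase v with hA
  set A' := (G.neighborFinset v).erase u with hA'
  have hAcard : A.card = G.degree u - 1 :=
    Finset.card_erase_of_mem ((SimpleGraph.mem_neighborFinset G u v).2 hadj)
  have hA'card : A'.card = G.degree v - 1 :=
    Finset.card_erase_of_mem ((SimpleGraph.mem_neighborFinset G v u).2 hadj.symm)
  set i := (A ∩ A').card with hi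
  have hIA : (A \ A').card + (A ∩ A').card = A.card := Finset.card_sdiff_add_card_inter A A'
  have hIA' : (A' \ A).card + (A' ∩ A).card = A'.card := Finset.card_sdiff_add_card_inter A' A
  have hcomm : (A' ∩ A).card = i := by rw [Finset.inter_comm]
  have hile : i ≤ A.card := Finset.card_le_card Finset.inter_subset_left
  have hdu1 : 1 ≤ G.degree u := by
    have : 0 < (G.neighborFinset u).card :=
      Finset.card_pos.2 ⟨v, (SimpleGraph.mem_neighborFinset G u v).2 hadj⟩
    exact this
  set p := min i (ku - 1) with hp
  obtain ⟨B, huB, hvB, hBu, hBv⟩ := exists_B G hadj p (ku - 1 - p) (ku - p)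
    (by show p ≤ (A ∩ A').card; omega)
    (by show ku - 1 - p ≤ (A \ A').card; omega)
    (by show ku - p ≤ (A' \ A).card; omega)
  have hBu' : (B ∩ G.neighborFinset u).card = ku - 1 := by omega
  have hBv' : (B ∩ G.neighborFinset v).card = ku := by omega
  have hkey := key_indicator G c hc κ hκ hext hadj B huB hvB
  rw [hBu', hBv'] at hkey
  rw [if_neg (by omega), if_pos (by omega), mul_zero, mul_one] at hkey
  exact absurd hkey.symm (hc v).ne'

end Final

section Main

variable (G : SimpleGraph V) [DecidableRel G.Adj]

lemma Q_adj (c : V → ℝ) (κ : V → ℤ) (hc : ∀ u, 0 < c u)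
    (hκ : ∀ u, 0 ≤ κ u ∧ κ u ≤ (G.degree u : ℤ))
    (hext : betaW G c κ = ∑ u : V,
        c u * (((G.degree u : ℝ) - κ u) * ((G.degree u : ℝ) - κ u + 1))
          / (2 * (G.degree u + 1)))
    {u v : V} (hadj : G.Adj u v) :
    c u * ((G.degree u : ℝ) - κ u) * ((G.degree u : ℝ) + κ u + 1)
        / (2 * (G.degree u : ℝ) * ((G.degree u : ℝ) + 1)) =
      c v * ((G.degree v : ℝ) - κ v) * ((G.degree v : ℝ) + κ v + 1)
        / (2 * (G.degree v : ℝ) * ((G.degree v : ℝ) + 1)) := by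
  classical
  have hdu1 : 1 ≤ G.degree u := by
    have : 0 < (G.neighborFinset u).card :=
      Finset.card_pos.2 ⟨v, (SimpleGraph.mem_neighborFinset G u v).2 hadj⟩
    exact this
  have hdv1 : 1 ≤ G.degree v := by
    have : 0 < (G.neighborFinset v).card :=
      Finset.card_pos.2 ⟨u, (SimpleGraph.mem_neighborFinset G v u).2 hadj.symm⟩
    exact this
  by_cases hu : κ u = (G.degree u : ℤ)
  · by_cases hv : κ v = (G.degree v : ℤ)
    · have e1 : ((G.degree u : ℝ) - κ u) = 0 := by
        rw [hu]; push_cast; ring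
      have e2 : ((G.degree v : ℝ) - κ v) = 0 := by
        rw [hv]; push_cast; ring
      rw [e1, e2]
      simp
    · exfalso
      have hv' : κ v < (G.degree v : ℤ) := lt_of_le_of_ne (hκ v).2 hv
      have := (auxAB G c κ hc hκ hext hadj.symm hv').2
      omega
  · have hu' : κ u < (G.degree u : ℤ) := lt_of_le_of_ne (hκ u).2 hu
    obtain ⟨h1, hv'⟩ := auxAB G c κ hc hκ hext hadj hu'
    obtain ⟨h2, _⟩ := auxAB G c κ hc hκ hext hadj.symm hv'
    have hκeq : κ u = κ v := le_antisymm h2 h1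
    have hceq : c u = c v := c_eq G c κ hc hκ hext hadj hu' hv' hκeq
    have hduR : ((G.degree u : ℝ)) ≠ 0 := by
      have : (0:ℝ) < (G.degree u : ℝ) := by exact_mod_cast hdu1
      exact this.ne'
    have hduR1 : ((G.degree u : ℝ)) + 1 ≠ 0 := by positivity
    have hdvR : ((G.degree v : ℝ)) ≠ 0 := by
      have : (0:ℝ) < (G.degree v : ℝ) := by exact_mod_cast hdv1
      exact this.ne'
    have hdvR1 : ((G.degree v : ℝ)) + 1 ≠ 0 := by positivity
    by_cases hk0 : κ u = 0
    · have hc0u : ((κ u : ℤ) : ℝ) = 0 := by rw [hk0]; simp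
      have hc0v : ((κ v : ℤ) : ℝ) = 0 := by rw [← hκeq, hk0]; simp
      have eL : c u * ((G.degree u : ℝ) - κ u) * ((G.degree u : ℝ) + κ u + 1)
          / (2 * (G.degree u : ℝ) * ((G.degree u : ℝ) + 1)) = c u / 2 := by
        rw [hc0u]
        field_simp
        ring
      have eR : c v * ((G.degree v : ℝ) - κ v) * ((G.degree v : ℝ) + κ v + 1)
          / (2 * (G.degree v : ℝ) * ((G.degree v : ℝ) + 1)) = c v / 2 := by
        rw [hc0v]
        field_simp
        ring
      rw [eL, eR, hceq]
    · have hk1 : 1 ≤ κ u := by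
        have := (hκ u).1
        omega
      have hdeq : G.degree u = G.degree v := by
        rcases lt_trichotomy (G.degree u) (G.degree v) with h | h | h
        · exact absurd (auxC G c κ hc hκ hext hadj hu' hv' hκeq hk1 h) id
        · exact h
        · exact absurd (auxC G c κ hc hκ hext hadj.symm hv' hu' hκeq.symm (hκeq ▸ hk1) h) id
      rw [hκeq, hceq, hdeq]

end Main

/-- In a connected extremal graph for the partial-incentives bound, the quantity
c(u)(d(u)−κ(u))(d(u)+κ(u)+1)/(2d(u)(d(u)+1)) is the same for every vertex. -/
theorem extremal_constant_beta (G : SimpleGraph V) [DecidableRel G.Adj] (hG : G.Connected)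
    (c : V → ℝ) (hc : ∀ u, 0 < c u)
    (κ : V → ℤ) (hκ : ∀ u, 0 ≤ κ u ∧ κ u ≤ (G.degree u : ℤ))
    (hext : betaW G c κ = ∑ u : V,
        c u * (((G.degree u : ℝ) - κ u) * ((G.degree u : ℝ) - κ u + 1)) / (2 * (G.degree u + 1))) :
    ∀ u v : V,
      c u * ((G.degree u : ℝ) - κ u) * ((G.degree u : ℝ) + κ u + 1)
        / (2 * (G.degree u : ℝ) * ((G.degree u : ℝ) + 1)) =
      c v * ((G.degree v : ℝ) - κ v) * ((G.degree v : ℝ) + κ v + 1)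
        / (2 * (G.degree v : ℝ) * ((G.degree v : ℝ) + 1)) := by
  intro u v
  set Q : V → ℝ := fun w => c w * ((G.degree w : ℝ) - κ w) * ((G.degree w : ℝ) + κ w + 1)
      / (2 * (G.degree w : ℝ) * ((G.degree w : ℝ) + 1)) with hQ
  show Q u = Q v
  have hwalk : ∀ {x y : V}, G.Walk x y → Q x = Q y := by
    intro x y p
    induction p with
    | nil => rfl
    | cons h _ ih => exact (Q_adj G c κ hc hκ hext h).trans ih
  exact (hG.preconnected u v).elim (fun p => hwalk p)
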